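/- Constant-witness existence (part i): For any instance (G = (V, E, α), k) of Broadcast Improvement with k ≥ 2 and optimum broadcast β*, there exists a set S ⊆ V² ∖ E of size at most 7k − 6 such that for every pair of vertices u, v ∈ V there exists a subset W_{uv} ⊆ S of size at most 3 with prox_{G + W_{uv}}(u, v) ≥ 4β* / (12k⁴ + 3k²); that is, S is a (3, 4β*/(12k⁴ + 3k²))-witnessing solution of size at most 7k − 6. -/

import Mathlib

open scoped Classical

variable {V : Type*} [Fintype V] [DecidableEq V]

/-- The proximity of `u` and `v` in the information graph `(V, E, α)`: the probability
that `u` and `v` are connected in a graph obtained by retaining each edge of `E`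
independently with probability `α`. -/
noncomputable def prox (E : Finset (Sym2 V)) (α : ℝ) (u v : V) : ℝ :=
  ∑ F ∈ E.powerset,
    if (SimpleGraph.fromEdgeSet (F : Set (Sym2 V))).Reachable u v then
      α ^ F.card * (1 - α) ^ (E \ F).card
    else 0

/-- The broadcast of an information graph: the minimum proximity over pairs of distinct
vertices. -/
noncomputable def broadcast (E : Finset (Sym2 V)) (α : ℝ) : ℝ :=
  ⨅ p : {p : V × V // p.1 ≠ p.2}, prox E α p.1.1 p.1.2

/-- The optimum broadcast achievable by adding at most `k` vertex pairs disjoint from `E`. -/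
noncomputable def optBroadcast (E : Finset (Sym2 V)) (α : ℝ) (k : ℕ) : ℝ :=
  ⨆ F : {F : Finset (Sym2 V) // F.card ≤ k ∧ ∀ e ∈ F, e ∉ E}, broadcast (E ∪ F.1) α

/-- The reach of a vertex `v`: the minimum proximity of `v` to any other vertex. -/
noncomputable def reach (E : Finset (Sym2 V)) (α : ℝ) (v : V) : ℝ :=
  ⨅ u : {u : V // u ≠ v}, prox E α v u.1

/-- The optimum reach of a source vertex `vs` achievable by adding at most `k`
vertex pairs disjoint from `E`. -/
noncomputable def optReach (E : Finset (Sym2 V)) (α : ℝ) (k : ℕ) (vs : V) : ℝ :=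
  ⨆ F : {F : Finset (Sym2 V) // F.card ≤ k ∧ ∀ e ∈ F, e ∉ E}, reach (E ∪ F.1) α vs

/-- The probability that, in a sampled graph, all edges of at least one member of the
family `P` of edge-lists are retained. -/
noncomputable def prPaths (E : Finset (Sym2 V)) (α : ℝ) (P : Set (List (Sym2 V))) : ℝ :=
  ∑ F ∈ E.powerset,
    if ∃ p ∈ P, ∀ e ∈ p, e ∈ F then α ^ F.card * (1 - α) ^ (E \ F).card
    else 0

/-!
Fix an optimal solution `D` (`|D| ≤ k`) and a hub vertex `h₀`, and let `S` be `D` together with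
the pairs joining `h₀` to the endpoints of `D`, so `|S| ≤ 3k ≤ 7k - 6`. A `u`-`v` connection in a
sample of `E ∪ D` either avoids `D`, or reaches an endpoint `x` of the first edge of `D` it uses
from `u` and leaves an endpoint `y` of the last one towards `v` inside `E`. By independence the
latter event has probability `α ^ |{e₁, e₂}| · P_E(u ~ x, y ~ v)`, and since conditioning on
present edges only helps connectivity, this is at most the proximity in `G + W`, where `W` is the
edge `e₁ = e₂` or the at most two hub pairs `x h₀`, `y h₀`. A union bound over the `(2k)²` choices
of `(x, y)` gives `β* ≤ prox_{G+D}(u, v) ≤ (1 + 4k²) · max_W prox_{G+W}(u, v)`, and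
`β* / (1 + 4k²) ≥ 4β* / (12k⁴ + 3k²)`.
-/

open Finset SimpleGraph

section SampleProb

variable {β : Type*} [DecidableEq β] {α : ℝ}

noncomputable def sampleProb (s : Finset β) (α : ℝ) (A : Finset β → Prop) : ℝ :=
  ∑ F ∈ s.powerset, if A F then α ^ F.card * (1 - α) ^ (s \ F).card else 0

lemma sampleWeight_nonneg (hα0 : 0 ≤ α) (hα1 : α ≤ 1) (s F : Finset β) :
    0 ≤ α ^ F.card * (1 - α) ^ (s \ F).card :=
  mul_nonneg (pow_nonneg hα0 _) (pow_nonneg (sub_nonneg.2 hα1) _)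

lemma sum_sampleWeight (s : Finset β) :
    ∑ F ∈ s.powerset, α ^ F.card * (1 - α) ^ (s \ F).card = 1 := by
  simpa using (Finset.prod_add (fun _ => α) (fun _ => 1 - α) s).symm

lemma sampleProb_nonneg (hα0 : 0 ≤ α) (hα1 : α ≤ 1) (s : Finset β) (A : Finset β → Prop) :
    0 ≤ sampleProb s α A :=
  sum_nonneg fun F _ => by split_ifs <;> simp [sampleWeight_nonneg hα0 hα1]

lemma sampleProb_le_one (hα0 : 0 ≤ α) (hα1 : α ≤ 1) (s : Finset β) (A : Finset β → Prop) :
    sampleProb s α A ≤ 1 := by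
  rw [← sum_sampleWeight (α := α) s]
  exact sum_le_sum fun F _ => by split_ifs <;> simp [sampleWeight_nonneg hα0 hα1]

lemma sampleProb_of_forall {s : Finset β} {A : Finset β → Prop} (h : ∀ F ⊆ s, A F) :
    sampleProb s α A = 1 := by
  rw [← sum_sampleWeight (α := α) s]
  exact sum_congr rfl fun F hF => if_pos (h F (mem_powerset.1 hF))

lemma sampleProb_eq_zero {s : Finset β} {A : Finset β → Prop} (h : ∀ F ⊆ s, ¬A F) :
    sampleProb s α A = 0 :=
  sum_eq_zero fun F hF => if_neg (h F (mem_powerset.1 hF))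

lemma sampleProb_congr {s : Finset β} {A B : Finset β → Prop} (h : ∀ F ⊆ s, A F ↔ B F) :
    sampleProb s α A = sampleProb s α B :=
  sum_congr rfl fun F hF => if_congr (h F (mem_powerset.1 hF)) rfl rfl

lemma sampleProb_mono (hα0 : 0 ≤ α) (hα1 : α ≤ 1) {s : Finset β} {A B : Finset β → Prop}
    (h : ∀ F ⊆ s, A F → B F) : sampleProb s α A ≤ sampleProb s α B := by
  refine sum_le_sum fun F hF => ?_
  by_cases hA : A F
  · rw [if_pos hA, if_pos (h F (mem_powerset.1 hF) hA)]
  · rw [if_neg hA]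
    split_ifs <;> simp [sampleWeight_nonneg hα0 hα1]

lemma sampleProb_or_le (hα0 : 0 ≤ α) (hα1 : α ≤ 1) (s : Finset β) (A B : Finset β → Prop) :
    sampleProb s α (fun F => A F ∨ B F) ≤ sampleProb s α A + sampleProb s α B := by
  rw [sampleProb, sampleProb, sampleProb, ← sum_add_distrib]
  refine sum_le_sum fun F _ => ?_
  have := sampleWeight_nonneg hα0 hα1 s F
  by_cases hA : A F <;> by_cases hB : B F <;> simp [hA, hB, this]

lemma sampleProb_exists_le_sum {ι : Type*} (hα0 : 0 ≤ α) (hα1 : α ≤ 1) (s : Finset β)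
    (I : Finset ι) (A : ι → Finset β → Prop) :
    sampleProb s α (fun F => ∃ i ∈ I, A i F) ≤ ∑ i ∈ I, sampleProb s α (A i) := by
  simp only [sampleProb]
  rw [Finset.sum_comm]
  refine sum_le_sum fun F _ => ?_
  have hw := sampleWeight_nonneg hα0 hα1 s F
  split_ifs with h
  · obtain ⟨i, hi, hAi⟩ := h
    refine (single_le_sum (fun j _ => ?_) hi).trans_eq' (if_pos hAi)
    split_ifs <;> simp [hw]
  · exact sum_nonneg fun j _ => by split_ifs <;> simp [hw]

lemma sampleProb_insert {s : Finset β} {d : β} (hd : d ∉ s) (A : Finset β → Prop) :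
    sampleProb (insert d s) α A
      = (1 - α) * sampleProb s α A + α * sampleProb s α (fun F => A (insert d F)) := by
  rw [sampleProb, sum_powerset_insert hd, sampleProb, sampleProb, mul_sum, mul_sum]
  congr 1 <;> refine sum_congr rfl fun F hF => ?_ <;> rw [mem_powerset] at hF <;>
    rw [mul_ite, mul_zero] <;> refine if_congr Iff.rfl ?_ rfl
  · have hdF : d ∉ F := fun h => hd (hF h)
    rw [insert_sdiff_of_notMem _ hdF, card_insert_of_notMem (fun h => hd (mem_sdiff.1 h).1),
      pow_succ]
    ring
  · have hdF : d ∉ F := fun h => hd (hF h)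
    rw [insert_sdiff_insert, sdiff_insert_of_notMem, card_insert_of_notMem hdF, pow_succ]
    · ring
    · exact fun h => hd h

lemma sampleProb_union_inter_and_subset {E D D' : Finset β} (hED : Disjoint E D)
    (hD' : D' ⊆ D) (A : Finset β → Prop) :
    sampleProb (E ∪ D) α (fun F => A (F ∩ E) ∧ D' ⊆ F) = α ^ D'.card * sampleProb E α A := by
  induction D using Finset.induction generalizing D' with
  | empty =>
    rw [subset_empty.1 hD', union_empty, card_empty, pow_zero, one_mul]
    exact sampleProb_congr fun F hF => by simp [inter_eq_left.2 hF]
  | @insert d D₀ hdD₀ ih =>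
    have hdE : d ∉ E := disjoint_right.1 hED (mem_insert_self d D₀)
    have hED₀ : Disjoint E D₀ := hED.mono_right (subset_insert d D₀)
    have hdU : d ∉ E ∪ D₀ := by simp [hdE, hdD₀]
    have h_erase : sampleProb (E ∪ D₀) α (fun F => A (insert d F ∩ E) ∧ D' ⊆ insert d F)
        = α ^ (D'.erase d).card * sampleProb E α A := by
      rw [← ih hED₀ (fun x hx => (mem_insert.1 (hD' (mem_of_mem_erase hx))).resolve_left
        (ne_of_mem_erase hx))]
      exact sampleProb_congr fun F _ => by rw [insert_inter_of_notMem hdE, subset_insert_iff]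
    rw [union_insert, sampleProb_insert hdU, h_erase]
    by_cases hdD' : d ∈ D'
    · obtain ⟨n, hn⟩ := Nat.exists_eq_succ_of_ne_zero (card_ne_zero_of_mem hdD')
      rw [sampleProb_eq_zero fun F hF h => hdU (hF (h.2 hdD')), card_erase_of_mem hdD', hn,
        Nat.succ_sub_one, pow_succ]
      ring
    · rw [ih hED₀ fun x hx => (mem_insert.1 (hD' hx)).resolve_left (ne_of_mem_of_not_mem hx hdD'),
        erase_eq_of_notMem hdD']
      ring

lemma sampleProb_union_inter {E D : Finset β} (hED : Disjoint E D) (A : Finset β → Prop) :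
    sampleProb (E ∪ D) α (fun F => A (F ∩ E)) = sampleProb E α A := by
  simpa using sampleProb_union_inter_and_subset (α := α) hED (empty_subset D) A

lemma sampleProb_le_of_subset (hα0 : 0 ≤ α) (hα1 : α ≤ 1) {E s : Finset β} (hEs : E ⊆ s)
    {A : Finset β → Prop} (hA : Monotone A) : sampleProb E α A ≤ sampleProb s α A := by
  rw [← sampleProb_union_inter (α := α) disjoint_sdiff A, union_sdiff_of_subset hEs]
  exact sampleProb_mono hα0 hα1 fun F _ => hA inter_subset_left

lemma mul_sampleProb_le_and_mem (hα0 : 0 ≤ α) (hα1 : α ≤ 1) {s : Finset β} {e : β}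
    (he : e ∈ s) {A : Finset β → Prop} (hA : Monotone A) :
    α * sampleProb s α A ≤ sampleProb s α (fun F => A F ∧ e ∈ F) := by
  have hne : e ∉ s.erase e := notMem_erase e s
  rw [← insert_erase he, sampleProb_insert hne, sampleProb_insert hne,
    sampleProb_eq_zero (A := fun F => A F ∧ e ∈ F) fun F hF h => hne (hF h.2),
    sampleProb_congr (A := fun F => A (insert e F) ∧ e ∈ insert e F)
      (B := fun F => A (insert e F)) fun F _ => by simp]
  have hins : sampleProb (s.erase e) α A ≤ sampleProb (s.erase e) α (fun F => A (insert e F)) :=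
    sampleProb_mono hα0 hα1 fun F _ => hA (subset_insert e F)
  nlinarith [mul_le_mul_of_nonneg_left hins (mul_nonneg hα0 (sub_nonneg.2 hα1))]

lemma pow_card_mul_sampleProb_le_and_subset (hα0 : 0 ≤ α) (hα1 : α ≤ 1) {s C : Finset β}
    (hC : C ⊆ s) {A : Finset β → Prop} (hA : Monotone A) :
    α ^ C.card * sampleProb s α A ≤ sampleProb s α (fun F => A F ∧ C ⊆ F) := by
  induction C using Finset.induction with
  | empty => simp
  | @insert c C hcC ih =>
    have hmono : Monotone fun F : Finset β => A F ∧ C ⊆ F :=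
      fun F G hFG h => ⟨hA hFG h.1, h.2.trans hFG⟩
    calc α ^ (insert c C).card * sampleProb s α A
        = α * (α ^ C.card * sampleProb s α A) := by rw [card_insert_of_notMem hcC]; ring
      _ ≤ α * sampleProb s α (fun F => A F ∧ C ⊆ F) :=
        mul_le_mul_of_nonneg_left (ih ((subset_insert c C).trans hC)) hα0
      _ ≤ sampleProb s α (fun F => (A F ∧ C ⊆ F) ∧ c ∈ F) :=
        mul_sampleProb_le_and_mem hα0 hα1 (hC (mem_insert_self c C)) hmono
      _ = sampleProb s α (fun F => A F ∧ insert c C ⊆ F) :=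
        sampleProb_congr fun F _ => by rw [insert_subset_iff]; tauto

end SampleProb

section Incidence

variable {U : Type*}

lemma reachable_fromEdgeSet_of_mem {s : Set (Sym2 U)} {e : Sym2 U} (he : e ∈ s) {x y : U}
    (hx : x ∈ e) (hy : y ∈ e) : (fromEdgeSet s).Reachable x y := by
  by_cases hxy : x = y
  · exact hxy ▸ Reachable.refl x
  · rw [(Sym2.mem_and_mem_iff hxy).1 ⟨hx, hy⟩] at he
    exact Adj.reachable ((fromEdgeSet_adj s).2 ⟨he, hxy⟩)

lemma SimpleGraph.Reachable.reachable_or_exists_adj_not_adj {G H : SimpleGraph U} {u v : U}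
    (h : G.Reachable u v) :
    H.Reachable u v ∨ ∃ a b, G.Adj a b ∧ ¬H.Adj a b ∧ H.Reachable u a ∧ G.Reachable b v := by
  obtain ⟨p⟩ := h
  induction p with
  | nil => exact Or.inl (Reachable.refl _)
  | @cons u w v hG q ih =>
    by_cases hH : H.Adj u w
    · rcases ih with hr | ⟨a, b, hab, hab', hua, hbv⟩
      · exact Or.inl (hH.reachable.trans hr)
      · exact Or.inr ⟨a, b, hab, hab', hH.reachable.trans hua, hbv⟩
    · exact Or.inr ⟨u, w, hG, hH, Reachable.refl u, q.reachable⟩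

variable [DecidableEq U]

def incidences (D : Finset (Sym2 U)) : Finset (Sym2 U × U) :=
  D.biUnion fun e => {e} ×ˢ e.toFinset

lemma mem_incidences {D : Finset (Sym2 U)} {p : Sym2 U × U} :
    p ∈ incidences D ↔ p.1 ∈ D ∧ p.2 ∈ p.1 := by
  obtain ⟨e, x⟩ := p
  simp [incidences, Sym2.mem_toFinset]

lemma card_incidences_le (D : Finset (Sym2 U)) : (incidences D).card ≤ 2 * D.card := by
  calc (incidences D).card ≤ ∑ e ∈ D, ({e} ×ˢ e.toFinset).card := card_biUnion_le
    _ ≤ ∑ _e ∈ D, 2 := sum_le_sum fun e _ => by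
        rw [card_product, card_singleton, one_mul, Sym2.card_toFinset]; split_ifs <;> simp
    _ = 2 * D.card := by rw [sum_const, smul_eq_mul, mul_comm]

/-- `i.1.1` and `i.2.1` are the first and the last edge of `D` on a `u`-`v` path in `F`, entered
at `i.1.2` and left at `i.2.2`. -/
lemma reachable_inter_or_exists_incidences {E D F : Finset (Sym2 U)} (hF : F ⊆ E ∪ D)
    {u v : U} (h : (fromEdgeSet (F : Set (Sym2 U))).Reachable u v) :
    (fromEdgeSet ((F ∩ E : Finset (Sym2 U)) : Set (Sym2 U))).Reachable u v ∨
      ∃ i ∈ incidences D ×ˢ incidences D,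
        ((fromEdgeSet ((F ∩ E : Finset (Sym2 U)) : Set (Sym2 U))).Reachable u i.1.2 ∧
          (fromEdgeSet ((F ∩ E : Finset (Sym2 U)) : Set (Sym2 U))).Reachable i.2.2 v) ∧
        ({i.1.1, i.2.1} : Finset (Sym2 U)) ⊆ F := by
  have crossing : ∀ {a b}, (fromEdgeSet (F : Set (Sym2 U))).Adj a b →
      ¬(fromEdgeSet ((F ∩ E : Finset (Sym2 U)) : Set (Sym2 U))).Adj a b →
      s(a, b) ∈ F ∧ s(a, b) ∈ D := by
    intro a b hab hab'
    simp only [fromEdgeSet_adj, coe_inter, Set.mem_inter_iff, mem_coe] at hab hab'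
    have hE : s(a, b) ∉ E := fun h => hab' ⟨⟨hab.1, h⟩, hab.2⟩
    exact ⟨hab.1, (mem_union.1 (hF hab.1)).resolve_left hE⟩
  rcases h.reachable_or_exists_adj_not_adj with huv | ⟨a, b, hab, hab', hua, hbv⟩
  · exact Or.inl huv
  obtain ⟨habF, habD⟩ := crossing hab hab'
  right
  rcases hbv.symm.reachable_or_exists_adj_not_adj with hvb | ⟨c, d, hcd, hcd', hvc, -⟩
  · exact ⟨((s(a, b), a), (s(a, b), b)), mem_product.2 ⟨mem_incidences.2 ⟨habD,
      Sym2.mem_mk_left a b⟩, mem_incidences.2 ⟨habD, Sym2.mem_mk_right a b⟩⟩, ⟨hua, hvb.symm⟩,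
      by simpa using habF⟩
  · obtain ⟨hcdF, hcdD⟩ := crossing hcd hcd'
    exact ⟨((s(a, b), a), (s(c, d), c)), mem_product.2 ⟨mem_incidences.2 ⟨habD,
      Sym2.mem_mk_left a b⟩, mem_incidences.2 ⟨hcdD, Sym2.mem_mk_left c d⟩⟩, ⟨hua, hvc.symm⟩,
      insert_subset habF (singleton_subset_iff.2 hcdF)⟩

def hubEdges (D : Finset (Sym2 U)) (h₀ : U) : Finset (Sym2 U) :=
  (incidences D).image fun p => s(p.2, h₀)

lemma card_hubEdges_le (D : Finset (Sym2 U)) (h₀ : U) : (hubEdges D h₀).card ≤ 2 * D.card :=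
  card_image_le.trans (card_incidences_le D)

def hubSolution (E D : Finset (Sym2 U)) (h₀ : U) : Finset (Sym2 U) :=
  (D ∪ hubEdges D h₀) \ E

lemma card_hubSolution_le (E D : Finset (Sym2 U)) (h₀ : U) :
    (hubSolution E D h₀).card ≤ 3 * D.card := by
  have := (card_le_card (sdiff_subset (t := E))).trans
    ((card_union_le D _).trans (Nat.add_le_add_left (card_hubEdges_le D h₀) _))
  rw [hubSolution]
  omega

lemma exists_connector {D : Finset (Sym2 U)} (h₀ : U) {p q : Sym2 U × U}
    (hp : p ∈ incidences D) (hq : q ∈ incidences D) :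
    ∃ C ⊆ D ∪ hubEdges D h₀, C.card ≤ ({p.1, q.1} : Finset (Sym2 U)).card ∧
      (fromEdgeSet (C : Set (Sym2 U))).Reachable p.2 q.2 := by
  have hp' := mem_incidences.1 hp
  have hq' := mem_incidences.1 hq
  by_cases hpq : p.1 = q.1
  · refine ⟨{p.1}, singleton_subset_iff.2 (mem_union_left _ hp'.1), by simp [hpq], ?_⟩
    exact reachable_fromEdgeSet_of_mem (mem_singleton_self _) hp'.2 (hpq ▸ hq'.2)
  · have hub : ∀ r ∈ incidences D, s(r.2, h₀) ∈ hubEdges D h₀ := fun r hr => mem_image_of_mem _ hr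
    refine ⟨{s(p.2, h₀), s(q.2, h₀)}, insert_subset (mem_union_right _ (hub p hp))
      (singleton_subset_iff.2 (mem_union_right _ (hub q hq))),
      card_le_two.trans (card_pair hpq).ge, ?_⟩
    have hph : (fromEdgeSet _).Reachable p.2 h₀ := reachable_fromEdgeSet_of_mem
      (by simp : s(p.2, h₀) ∈ (({s(p.2, h₀), s(q.2, h₀)} : Finset (Sym2 U)) : Set (Sym2 U)))
      (Sym2.mem_mk_left _ _) (Sym2.mem_mk_right _ _)
    have hqh : (fromEdgeSet _).Reachable q.2 h₀ := reachable_fromEdgeSet_of_mem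
      (by simp : s(q.2, h₀) ∈ (({s(p.2, h₀), s(q.2, h₀)} : Finset (Sym2 U)) : Set (Sym2 U)))
      (Sym2.mem_mk_left _ _) (Sym2.mem_mk_right _ _)
    exact hph.trans hqh.symm

end Incidence

section Proximity

variable {α : ℝ}

lemma prox_eq_sampleProb (E : Finset (Sym2 V)) (u v : V) :
    prox E α u v
      = sampleProb E α (fun F => (fromEdgeSet (F : Set (Sym2 V))).Reachable u v) :=
  sum_congr rfl fun F _ => by
    by_cases h : (fromEdgeSet (F : Set (Sym2 V))).Reachable u v <;> simp [h]

lemma prox_nonneg (hα0 : 0 ≤ α) (hα1 : α ≤ 1) (E : Finset (Sym2 V)) (u v : V) :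
    0 ≤ prox E α u v := by
  rw [prox_eq_sampleProb]; exact sampleProb_nonneg hα0 hα1 _ _

lemma prox_le_one (hα0 : 0 ≤ α) (hα1 : α ≤ 1) (E : Finset (Sym2 V)) (u v : V) :
    prox E α u v ≤ 1 := by
  rw [prox_eq_sampleProb]; exact sampleProb_le_one hα0 hα1 _ _

lemma prox_self (E : Finset (Sym2 V)) (u : V) : prox E α u u = 1 := by
  rw [prox_eq_sampleProb]; exact sampleProb_of_forall fun F _ => Reachable.refl u

lemma broadcast_nonneg (hα0 : 0 ≤ α) (hα1 : α ≤ 1) (E : Finset (Sym2 V)) :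
    0 ≤ broadcast E α :=
  Real.iInf_nonneg fun _ => prox_nonneg hα0 hα1 _ _ _

lemma broadcast_le_prox (hα0 : 0 ≤ α) (hα1 : α ≤ 1) (E : Finset (Sym2 V)) (u v : V) :
    broadcast E α ≤ prox E α u v := by
  have hbdd : BddBelow (Set.range fun p : {p : V × V // p.1 ≠ p.2} => prox E α p.1.1 p.1.2) :=
    ⟨0, Set.forall_mem_range.2 fun _ => prox_nonneg hα0 hα1 _ _ _⟩
  by_cases huv : u = v
  · rw [huv, prox_self]
    rcases isEmpty_or_nonempty {p : V × V // p.1 ≠ p.2} with hp | ⟨⟨p⟩⟩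
    · rw [broadcast, Real.iInf_of_isEmpty]; exact zero_le_one
    · exact (ciInf_le hbdd p).trans (prox_le_one hα0 hα1 _ _ _)
  · exact ciInf_le hbdd ⟨(u, v), huv⟩

lemma pow_card_mul_sampleProb_le_prox_union (hα0 : 0 ≤ α) (hα1 : α ≤ 1)
    (E C : Finset (Sym2 V)) {u v x y : V} (hxy : (fromEdgeSet (C : Set (Sym2 V))).Reachable x y) :
    α ^ C.card * sampleProb E α (fun F => (fromEdgeSet (F : Set (Sym2 V))).Reachable u x ∧
        (fromEdgeSet (F : Set (Sym2 V))).Reachable y v) ≤ prox (E ∪ C) α u v := by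
  have hmono : Monotone fun F : Finset (Sym2 V) =>
      (fromEdgeSet (F : Set (Sym2 V))).Reachable u x ∧
        (fromEdgeSet (F : Set (Sym2 V))).Reachable y v := fun F G hFG h =>
    ⟨h.1.mono (fromEdgeSet_mono (coe_subset.2 hFG)),
      h.2.mono (fromEdgeSet_mono (coe_subset.2 hFG))⟩
  rw [prox_eq_sampleProb]
  calc _ ≤ α ^ C.card * sampleProb (E ∪ C) α _ := mul_le_mul_of_nonneg_left
        (sampleProb_le_of_subset hα0 hα1 subset_union_left hmono) (pow_nonneg hα0 _)
    _ ≤ _ := pow_card_mul_sampleProb_le_and_subset hα0 hα1 subset_union_right hmono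
    _ ≤ _ := sampleProb_mono hα0 hα1 fun F _ ⟨⟨hux, hyv⟩, hCF⟩ =>
        hux.trans ((hxy.mono (fromEdgeSet_mono (coe_subset.2 hCF))).trans hyv)

lemma prox_union_le_add_sum (hα0 : 0 ≤ α) (hα1 : α ≤ 1) {E D : Finset (Sym2 V)}
    (hED : Disjoint E D) (u v : V) :
    prox (E ∪ D) α u v ≤ prox E α u v + ∑ i ∈ incidences D ×ˢ incidences D,
      α ^ ({i.1.1, i.2.1} : Finset (Sym2 V)).card *
        sampleProb E α (fun F => (fromEdgeSet (F : Set (Sym2 V))).Reachable u i.1.2 ∧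
          (fromEdgeSet (F : Set (Sym2 V))).Reachable i.2.2 v) := by
  rw [prox_eq_sampleProb, prox_eq_sampleProb, ← sampleProb_union_inter (α := α) hED]
  refine (sampleProb_mono hα0 hα1 fun F hF h => reachable_inter_or_exists_incidences hF h).trans
    ((sampleProb_or_le hα0 hα1 _ _ _).trans (add_le_add_right ?_ _))
  refine (sampleProb_exists_le_sum hα0 hα1 _ _ _).trans_eq (sum_congr rfl fun i hi => ?_)
  obtain ⟨hi₁, hi₂⟩ := mem_product.1 hi
  exact sampleProb_union_inter_and_subset hED (insert_subset (mem_incidences.1 hi₁).1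
    (singleton_subset_iff.2 (mem_incidences.1 hi₂).1))
    fun F => (fromEdgeSet (F : Set (Sym2 V))).Reachable u i.1.2 ∧
      (fromEdgeSet (F : Set (Sym2 V))).Reachable i.2.2 v

lemma prox_union_le_of_hub (hα0 : 0 ≤ α) (hα1 : α ≤ 1) {E D : Finset (Sym2 V)}
    (hED : Disjoint E D) (h₀ : V) {u v : V} {τ : ℝ}
    (hτ : ∀ W ⊆ hubSolution E D h₀, W.card ≤ 2 → prox (E ∪ W) α u v ≤ τ) :
    prox (E ∪ D) α u v ≤ (1 + (2 * D.card : ℝ) ^ 2) * τ := by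
  have hE : prox E α u v ≤ τ := by simpa using hτ ∅ (empty_subset _) (by simp)
  have hτ0 : 0 ≤ τ := (prox_nonneg hα0 hα1 E u v).trans hE
  have hterm : ∀ i ∈ incidences D ×ˢ incidences D,
      α ^ ({i.1.1, i.2.1} : Finset (Sym2 V)).card *
        sampleProb E α (fun F => (fromEdgeSet (F : Set (Sym2 V))).Reachable u i.1.2 ∧
          (fromEdgeSet (F : Set (Sym2 V))).Reachable i.2.2 v) ≤ τ := by
    intro i hi
    obtain ⟨C, hCS, hC, hconn⟩ := exists_connector h₀ (mem_product.1 hi).1 (mem_product.1 hi).2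
    calc _ ≤ α ^ C.card * _ := mul_le_mul_of_nonneg_right (pow_le_pow_of_le_one hα0 hα1 hC)
          (sampleProb_nonneg hα0 hα1 _ _)
      _ ≤ prox (E ∪ (C \ E)) α u v := by
          rw [union_sdiff_self_eq_union]
          exact pow_card_mul_sampleProb_le_prox_union hα0 hα1 E C hconn
      _ ≤ τ := hτ _ (sdiff_subset_sdiff hCS le_rfl)
          ((card_le_card sdiff_subset).trans (hC.trans card_le_two))
  have hcard : ((incidences D ×ˢ incidences D).card : ℝ) ≤ (2 * D.card : ℝ) ^ 2 := by
    rw [card_product, sq]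
    exact_mod_cast Nat.mul_le_mul (card_incidences_le D) (card_incidences_le D)
  calc prox (E ∪ D) α u v
      ≤ τ + (incidences D ×ˢ incidences D).card * τ := (prox_union_le_add_sum hα0 hα1 hED u v).trans
        (add_le_add hE ((sum_le_card_nsmul _ _ τ hterm).trans_eq (nsmul_eq_mul _ _)))
    _ ≤ (1 + (2 * D.card : ℝ) ^ 2) * τ := by nlinarith

lemma exists_witness_of_hub (hα0 : 0 ≤ α) (hα1 : α ≤ 1) {E D : Finset (Sym2 V)}
    (hED : Disjoint E D) (h₀ : V) (u v : V) :
    ∃ W ⊆ hubSolution E D h₀, W.card ≤ 2 ∧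
      prox (E ∪ D) α u v ≤ (1 + (2 * D.card : ℝ) ^ 2) * prox (E ∪ W) α u v := by
  obtain ⟨W, hW, hWmax⟩ := (hubSolution E D h₀).powerset.filter (·.card ≤ 2)
    |>.exists_max_image (fun W => prox (E ∪ W) α u v) ⟨∅, by simp⟩
  obtain ⟨hWS, hW2⟩ := mem_filter.1 hW
  exact ⟨W, mem_powerset.1 hWS, hW2, prox_union_le_of_hub hα0 hα1 hED h₀
    fun W' hW' hW'2 => hWmax W' (mem_filter.2 ⟨mem_powerset.2 hW', hW'2⟩)⟩

lemma exists_optBroadcast_eq (E : Finset (Sym2 V)) (α : ℝ) (k : ℕ) :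
    ∃ D : Finset (Sym2 V), D.card ≤ k ∧ Disjoint E D ∧
      optBroadcast E α k = broadcast (E ∪ D) α := by
  have : Nonempty {F : Finset (Sym2 V) // F.card ≤ k ∧ ∀ e ∈ F, e ∉ E} := ⟨⟨∅, by simp⟩⟩
  obtain ⟨⟨D, hDk, hDE⟩, hD⟩ := exists_eq_ciSup_of_finite
    (f := fun F : {F : Finset (Sym2 V) // F.card ≤ k ∧ ∀ e ∈ F, e ∉ E} => broadcast (E ∪ F.1) α)
  exact ⟨D, hDk, disjoint_right.2 hDE, hD.symm⟩

end Proximity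

/-- constant-witness existence (part i). -/
theorem constant_witness_existence_i
    (E : Finset (Sym2 V)) (α : ℝ) (hα0 : 0 ≤ α) (hα1 : α ≤ 1)
    (k : ℕ) (hk : 2 ≤ k) :
    ∃ S : Finset (Sym2 V), (∀ e ∈ S, e ∉ E) ∧ S.card ≤ 7 * k - 6 ∧
      ∀ u v : V, ∃ W ⊆ S, W.card ≤ 3 ∧
        4 * optBroadcast E α k / (12 * (k : ℝ) ^ 4 + 3 * (k : ℝ) ^ 2) ≤
          prox (E ∪ W) α u v := by
  rcases isEmpty_or_nonempty V with hV | ⟨⟨h₀⟩⟩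
  · exact ⟨∅, by simp, by simp, fun u => isEmptyElim u⟩
  obtain ⟨D, hDk, hED, hopt⟩ := exists_optBroadcast_eq E α k
  refine ⟨hubSolution E D h₀, fun e he => (mem_sdiff.1 he).2,
    by have := card_hubSolution_le E D h₀; omega, fun u v => ?_⟩
  obtain ⟨W, hWS, hW2, hW⟩ := exists_witness_of_hub hα0 hα1 hED h₀ u v
  refine ⟨W, hWS, hW2.trans (by norm_num), ?_⟩
  have hk' : (2 : ℝ) ≤ k := by exact_mod_cast hk
  have hDk' : (2 * D.card : ℝ) ^ 2 ≤ 4 * (k : ℝ) ^ 2 := by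
    have : (D.card : ℝ) ≤ k := by exact_mod_cast hDk
    nlinarith [(D.card).cast_nonneg (α := ℝ)]
  have hβ0 : 0 ≤ optBroadcast E α k := hopt ▸ broadcast_nonneg hα0 hα1 _
  have hβ : optBroadcast E α k ≤ (1 + 4 * (k : ℝ) ^ 2) * prox (E ∪ W) α u v :=
    calc optBroadcast E α k ≤ prox (E ∪ D) α u v := hopt ▸ broadcast_le_prox hα0 hα1 _ u v
      _ ≤ (1 + (2 * D.card : ℝ) ^ 2) * prox (E ∪ W) α u v := hW
      _ ≤ _ := mul_le_mul_of_nonneg_right (by linarith) (prox_nonneg hα0 hα1 _ _ _)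
  rw [div_le_iff₀ (by positivity)]
  calc 4 * optBroadcast E α k ≤ 3 * (k : ℝ) ^ 2 * optBroadcast E α k :=
      mul_le_mul_of_nonneg_right (by nlinarith) hβ0
    _ ≤ 3 * (k : ℝ) ^ 2 * ((1 + 4 * (k : ℝ) ^ 2) * prox (E ∪ W) α u v) := by gcongr
    _ = _ := by ring
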